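/- For all real u, v with u ≠ v, the Airy kernel satisfies ∫₀^∞ Ai(u+z) · Ai(z+v) dz = ( Ai(u)·Ai'(v) − Ai'(u)·Ai(v) ) / (u − v), the integral on the left being absolutely convergent. -/

import Mathlib

open Filter Real MeasureTheory

/-- The Airy function, defined for real `u` by the improper integral
`Ai(u) = (1/π) ∫₀^∞ cos(t³/3 + u t) dt`, understood as the limit of
`∫₀^R cos(t³/3 + u t) dt` as `R → ∞`. -/
noncomputable def Ai (u : ℝ) : ℝ :=
  (1 / Real.pi) *
    limUnder Filter.atTop
      (fun R : ℝ => ∫ t in (0:ℝ)..R, Real.cos (t ^ 3 / 3 + u * t))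

/-!
Write `φ = t³/3 + x t`. Since `∂ₜ sin φ = (t² + x) cos φ`, one integration by parts turns
`∫₀^∞ cos φ dt` into an absolutely convergent integral:
`π Ai x = approx b x + ∫_b^∞ 2t sin φ / (t² + x)² dt`, where
`approx b x = ∫₀^b cos φ dt - sin φ(b) / (b² + x)`.
Unlike the plain partial integrals, the corrected ones `approx b` behave well in `x`: their first
derivatives converge locally uniformly as `b → ∞`, and their second derivatives equal
`x · approx b x` up to `O(b⁻²)`, because `∫₀^b t² cos φ dt = sin φ(b) - x ∫₀^b cos φ dt`. Hence
`Ai'' = x Ai`. The representation with `b = 0` gives `|Ai x| ≤ 1/x` for `x > 0`, and the energy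
`Ai'² - x Ai²`, which decreases along the Airy equation, keeps `Ai'` bounded on `[1, ∞)`.
Finally `W z = Ai (u+z) Ai' (v+z) - Ai' (u+z) Ai (v+z)` has `W' = (v - u) Ai (u+z) Ai (v+z)` and
tends to `0`, so the integral is `W 0 / (u - v)`.
-/

open Set Topology Metric

theorem tendstoUniformlyOn_of_dist_le {ι α β : Type*} [PseudoMetricSpace β] {l : Filter ι}
    {F : ι → α → β} {f : α → β} {s : Set α} {δ : ι → ℝ} (hδ : Tendsto δ l (𝓝 0))
    (h : ∀ᶠ n in l, ∀ x ∈ s, dist (f x) (F n x) ≤ δ n) : TendstoUniformlyOn F f l s := by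
  refine Metric.tendstoUniformlyOn_iff.2 fun ε hε => ?_
  filter_upwards [h, hδ.eventually (gt_mem_nhds hε)] with n hn hδn x hx
  exact (hn x hx).trans_lt hδn

theorem hasDerivAt_intervalIntegral_of_continuous {F F' : ℝ → ℝ → ℝ} {a b x : ℝ}
    (hF : Continuous (Function.uncurry F)) (hF' : Continuous (Function.uncurry F'))
    (hd : ∀ y t, HasDerivAt (F · t) (F' y t) y) :
    HasDerivAt (fun y => ∫ t in a..b, F y t) (∫ t in a..b, F' x t) x := by
  have hFy (y : ℝ) : Continuous (F y) := hF.comp (Continuous.prodMk_right y)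
  obtain ⟨C, hC⟩ := ((isCompact_closedBall x 1).prod (isCompact_uIcc (a := a) (b := b)))
    |>.exists_bound_of_continuousOn hF'.continuousOn
  refine (intervalIntegral.hasDerivAt_integral_of_dominated_loc_of_deriv_le (bound := fun _ => C)
    (ball_mem_nhds x one_pos) (.of_forall fun y => (hFy y).aestronglyMeasurable)
    ((hFy x).intervalIntegrable _ _)
    (hF'.comp (Continuous.prodMk_right x)).aestronglyMeasurable
    (.of_forall fun t ht y hy => hC (y, t) ⟨ball_subset_closedBall hy, uIoc_subset_uIcc ht⟩)
    intervalIntegrable_const (.of_forall fun t _ y _ => hd y t)).2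

theorem intervalIntegral_sub_boundary_eq {f g P : ℝ → ℝ} {c b : ℝ}
    (hP : ∀ t ∈ uIcc c b, HasDerivAt P (f t - g t) t) (hf : Continuous f)
    (hg : IntervalIntegrable g volume c b) :
    ((∫ t in (0 : ℝ)..b, f t) - P b) - ((∫ t in (0 : ℝ)..c, f t) - P c) = ∫ t in c..b, g t := by
  have hfi (p q : ℝ) : IntervalIntegrable f volume p q := hf.intervalIntegrable p q
  have hFTC := intervalIntegral.integral_eq_sub_of_hasDerivAt hP ((hfi c b).sub hg)
  rw [intervalIntegral.integral_sub (hfi c b) hg] at hFTC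
  have hsplit := intervalIntegral.integral_interval_sub_left (hfi 0 b) (hfi 0 c)
  linarith

theorem integral_Ioi_sub_intervalIntegral {g : ℝ → ℝ} {c b : ℝ} (hcb : c ≤ b)
    (hg : IntegrableOn g (Ioi c)) :
    (∫ t in Ioi c, g t) - ∫ t in c..b, g t = ∫ t in Ioi b, g t := by
  rw [← Ioc_union_Ioi_eq_Ioi hcb, setIntegral_union Ioc_disjoint_Ioi_same measurableSet_Ioi
    (hg.mono_set Ioc_subset_Ioi_self) (hg.mono_set (Ioi_subset_Ioi hcb)),
    intervalIntegral.integral_of_le hcb]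
  ring

theorem eqOn_mul_rpow_neg_two (C : ℝ) {c : ℝ} (hc : 0 < c) :
    EqOn (fun t => C * t ^ (-2 : ℝ)) (fun t => C / t ^ 2) (Ioi c) := fun t ht => by
  dsimp only
  rw [Real.rpow_neg (hc.trans ht).le, Real.rpow_two, div_eq_mul_inv]

theorem integrableOn_Ioi_div_sq (C : ℝ) {c : ℝ} (hc : 0 < c) :
    IntegrableOn (fun t => C / t ^ 2) (Ioi c) :=
  IntegrableOn.congr_fun ((integrableOn_Ioi_rpow_of_lt (by norm_num) hc).const_mul C)
    (eqOn_mul_rpow_neg_two C hc) measurableSet_Ioi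

theorem integral_Ioi_div_sq (C : ℝ) {c : ℝ} (hc : 0 < c) :
    ∫ t in Ioi c, C / t ^ 2 = C / c := by
  rw [← setIntegral_congr_fun measurableSet_Ioi (eqOn_mul_rpow_neg_two C hc), integral_const_mul,
    integral_Ioi_rpow_of_lt (by norm_num) hc]
  norm_num [div_eq_mul_inv, Real.rpow_neg_one]

theorem abs_integral_Ioi_le_of_abs_le_div_sq {f : ℝ → ℝ} {c C : ℝ} (hc : 0 < c)
    (hf : ∀ t > c, |f t| ≤ C / t ^ 2) : |∫ t in Ioi c, f t| ≤ C / c := by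
  rw [← integral_Ioi_div_sq C hc]
  exact norm_integral_le_of_norm_le (integrableOn_Ioi_div_sq C hc)
    ((ae_restrict_mem measurableSet_Ioi).mono fun t ht =>
      (Real.norm_eq_abs (f t)).trans_le (hf t ht))

theorem add_integral_Ioi_sub_eq {F g : ℝ → ℝ} {c b : ℝ} (hg : IntegrableOn g (Ioi c))
    (hF : ∀ b ≥ c, F b - F c = ∫ t in c..b, g t) (hcb : c ≤ b) :
    F c + (∫ t in Ioi c, g t) - F b = ∫ t in Ioi b, g t := by
  rw [← integral_Ioi_sub_intervalIntegral hcb hg, ← hF b hcb]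
  ring

theorem tendsto_of_sub_eq_intervalIntegral {F g : ℝ → ℝ} {c : ℝ} (hg : IntegrableOn g (Ioi c))
    (hF : ∀ b ≥ c, F b - F c = ∫ t in c..b, g t) :
    Tendsto F atTop (𝓝 (F c + ∫ t in Ioi c, g t)) := by
  refine ((intervalIntegral_tendsto_integral_Ioi c hg tendsto_id).const_add (F c)).congr' ?_
  filter_upwards [eventually_ge_atTop c] with b hb
  rw [id, ← hF b hb]
  ring

theorem integrableOn_Ioi_of_abs_le_div_sq {f : ℝ → ℝ} {c Z C : ℝ} (hf : Continuous f)
    (hZ : 0 < Z) (hbound : ∀ z > Z, |f z| ≤ C / z ^ 2) : IntegrableOn f (Ioi c) := by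
  refine IntegrableOn.mono_set (IntegrableOn.union hf.integrableOn_Ioc ?_)
    (fun z (hz : c < z) => (le_or_gt z Z).imp (fun h => ⟨hz, h⟩) id : Ioi c ⊆ Ioc c Z ∪ Ioi Z)
  exact (integrableOn_Ioi_div_sq C hZ).mono' hf.aestronglyMeasurable.restrict
    ((ae_restrict_mem measurableSet_Ioi).mono fun z hz =>
      (Real.norm_eq_abs _).trans_le (hbound z hz))

theorem abs_mul_sin_div_le {a s : ℝ} (θ : ℝ) (n : ℕ) (ha : 0 ≤ a) (hs : 0 < s) :
    |a * sin θ / s ^ n| ≤ a / s ^ n := by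
  rw [abs_div, abs_mul, abs_of_nonneg ha, abs_of_pos (pow_pos hs n)]
  gcongr
  exact mul_le_of_le_one_right ha (abs_sin_le_one θ)

theorem abs_mul_cos_div_le {a s : ℝ} (θ : ℝ) (n : ℕ) (ha : 0 ≤ a) (hs : 0 < s) :
    |a * cos θ / s ^ n| ≤ a / s ^ n := by
  rw [abs_div, abs_mul, abs_of_nonneg ha, abs_of_pos (pow_pos hs n)]
  gcongr
  exact mul_le_of_le_one_right ha (abs_cos_le_one θ)

section AiryEquation

variable {f f' : ℝ → ℝ} (hf : ∀ x, HasDerivAt f (f' x) x) (hf' : ∀ x, HasDerivAt f' (x * f x) x)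
include hf hf'

theorem antitone_deriv_sq_sub_mul_sq : Antitone fun x => f' x ^ 2 - x * f x ^ 2 := by
  have hE (x : ℝ) : HasDerivAt (fun x => f' x ^ 2 - x * f x ^ 2) (-(f x ^ 2)) x := by
    refine (((hf' x).pow 2).sub ((hasDerivAt_id' x).mul ((hf x).pow 2))).congr_deriv ?_
    simp only [Pi.pow_apply]
    ring
  exact antitone_of_hasDerivAt_nonpos hE fun x => neg_nonpos.2 (sq_nonneg _)

theorem hasDerivAt_wronskian_comp_add (u v z : ℝ) :
    HasDerivAt (fun z => f (u + z) * f' (v + z) - f' (u + z) * f (v + z))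
      ((v - u) * (f (u + z) * f (v + z))) z := by
  have hshift {g g' : ℝ → ℝ} (hg : ∀ x, HasDerivAt g (g' x) x) (a : ℝ) :
      HasDerivAt (fun z => g (a + z)) (g' (a + z)) z := (hg (a + z)).comp_const_add a z
  refine (((hshift hf u).mul (hshift hf' v)).sub
    ((hshift hf' u).mul (hshift hf v))).congr_deriv ?_
  ring

end AiryEquation

noncomputable section

namespace Airy

/- With `φ = phase x t`: `cos φ = ∂ₜ (boundary x t) + remainder x t`; the `…Deriv` functions are
`x`-derivatives, and `defect x b` is the error of `approx b` in the Airy equation. -/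

def phase (x t : ℝ) : ℝ := t ^ 3 / 3 + x * t

def boundary (x t : ℝ) : ℝ := sin (phase x t) / (t ^ 2 + x)

def boundaryDeriv (x t : ℝ) : ℝ :=
  t * cos (phase x t) / (t ^ 2 + x) - sin (phase x t) / (t ^ 2 + x) ^ 2

def remainder (x t : ℝ) : ℝ := 2 * t * sin (phase x t) / (t ^ 2 + x) ^ 2

def remainderDeriv (x t : ℝ) : ℝ :=
  2 * t ^ 2 * cos (phase x t) / (t ^ 2 + x) ^ 2 - 4 * t * sin (phase x t) / (t ^ 2 + x) ^ 3

def approx (b x : ℝ) : ℝ := (∫ t in (0 : ℝ)..b, cos (phase x t)) - boundary x b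

def approxDeriv (b x : ℝ) : ℝ := -(∫ t in (0 : ℝ)..b, t * sin (phase x t)) - boundaryDeriv x b

def defect (x b : ℝ) : ℝ :=
  2 * b * cos (phase x b) / (b ^ 2 + x) ^ 2 - 2 * sin (phase x b) / (b ^ 2 + x) ^ 3

theorem hasDerivAt_phase_right (x t : ℝ) : HasDerivAt (phase x) (t ^ 2 + x) t := by
  have := ((hasDerivAt_pow 3 t).div_const 3).add ((hasDerivAt_id t).const_mul x)
  exact this.congr_deriv (by norm_num)

theorem hasDerivAt_phase_left (x t : ℝ) : HasDerivAt (phase · t) t x :=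
  (hasDerivAt_mul_const t).const_add (t ^ 3 / 3)

theorem hasDerivAt_sq_add (x t : ℝ) : HasDerivAt (fun s => s ^ 2 + x) (2 * t) t := by
  simpa using (hasDerivAt_pow 2 t).add_const x

theorem hasDerivAt_boundary_right {x t : ℝ} (h : t ^ 2 + x ≠ 0) :
    HasDerivAt (boundary x) (cos (phase x t) - remainder x t) t := by
  have := (hasDerivAt_phase_right x t).sin.div (hasDerivAt_sq_add x t) h
  refine this.congr_deriv ?_
  unfold remainder
  field_simp

theorem hasDerivAt_boundaryDeriv_right {x t : ℝ} (h : t ^ 2 + x ≠ 0) :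
    HasDerivAt (boundaryDeriv x) (-(t * sin (phase x t)) - remainderDeriv x t) t := by
  have hφ := hasDerivAt_phase_right x t
  have hd := hasDerivAt_sq_add x t
  have h1 : HasDerivAt (fun s => s * cos (phase x s) / (s ^ 2 + x))
      (((1 * cos (phase x t) + t * (-sin (phase x t) * (t ^ 2 + x))) * (t ^ 2 + x)
        - t * cos (phase x t) * (2 * t)) / (t ^ 2 + x) ^ 2) t :=
    ((hasDerivAt_id' t).mul hφ.cos).div hd h
  have h2 : HasDerivAt (fun s => sin (phase x s) / (s ^ 2 + x) ^ 2)
      ((cos (phase x t) * (t ^ 2 + x) * (t ^ 2 + x) ^ 2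
        - sin (phase x t) * (2 * (t ^ 2 + x) * (2 * t))) / ((t ^ 2 + x) ^ 2) ^ 2) t := by
    refine (hφ.sin.div (hd.pow 2) (pow_ne_zero 2 h)).congr_deriv ?_
    norm_num
  refine (h1.sub h2).congr_deriv ?_
  unfold remainderDeriv
  field_simp
  ring

theorem hasDerivAt_boundary_left {x b : ℝ} (h : b ^ 2 + x ≠ 0) :
    HasDerivAt (boundary · b) (boundaryDeriv x b) x := by
  have := (hasDerivAt_phase_left x b).sin.div ((hasDerivAt_id' x).const_add (b ^ 2)) h
  refine this.congr_deriv ?_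
  unfold boundaryDeriv
  field_simp

theorem hasDerivAt_boundaryDeriv_left {x b : ℝ} (h : b ^ 2 + x ≠ 0) :
    HasDerivAt (boundaryDeriv · b)
      (-(b ^ 2 * sin (phase x b) / (b ^ 2 + x)) - 2 * b * cos (phase x b) / (b ^ 2 + x) ^ 2
        + 2 * sin (phase x b) / (b ^ 2 + x) ^ 3) x := by
  have hφ := hasDerivAt_phase_left x b
  have hd : HasDerivAt (fun y => b ^ 2 + y) 1 x := (hasDerivAt_id' x).const_add (b ^ 2)
  have h2 : HasDerivAt (fun y => sin (phase y b) / (b ^ 2 + y) ^ 2)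
      ((cos (phase x b) * b * (b ^ 2 + x) ^ 2 - sin (phase x b) * (2 * (b ^ 2 + x)))
        / ((b ^ 2 + x) ^ 2) ^ 2) x := by
    refine (hφ.sin.div (hd.pow 2) (pow_ne_zero 2 h)).congr_deriv ?_
    norm_num
  refine (((hφ.cos.const_mul b).div hd h).sub h2).congr_deriv ?_
  field_simp
  ring

theorem hasDerivAt_approx {x b : ℝ} (h : b ^ 2 + x ≠ 0) :
    HasDerivAt (approx b) (approxDeriv b x) x := by
  have hint := hasDerivAt_intervalIntegral_of_continuous (a := 0) (b := b) (x := x)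
    (F := fun y t => cos (phase y t)) (F' := fun y t => -(t * sin (phase y t)))
    (by unfold Function.uncurry phase; fun_prop) (by unfold Function.uncurry phase; fun_prop)
    fun y t => (hasDerivAt_phase_left y t).cos.congr_deriv (by ring)
  rw [intervalIntegral.integral_neg] at hint
  exact hint.sub (hasDerivAt_boundary_left h)

theorem integral_sq_mul_cos_phase (x b : ℝ) :
    ∫ t in (0 : ℝ)..b, t ^ 2 * cos (phase x t) =
      sin (phase x b) - x * ∫ t in (0 : ℝ)..b, cos (phase x t) := by
  have hcont : Continuous fun t => cos (phase x t) := by unfold phase; fun_prop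
  have hint (f : ℝ → ℝ) (hf : Continuous f) :
      IntervalIntegrable (fun t => f t * cos (phase x t)) volume 0 b :=
    (hf.mul hcont).intervalIntegrable 0 b
  have hFTC := intervalIntegral.integral_eq_sub_of_hasDerivAt
    (fun t _ => (hasDerivAt_phase_right x t).sin.congr_deriv (by ring))
    ((hint _ (continuous_pow 2)).add (hint _ continuous_const))
  rw [intervalIntegral.integral_add (hint _ (continuous_pow 2)) (hint _ continuous_const),
    intervalIntegral.integral_const_mul] at hFTC
  rw [show phase x 0 = 0 by simp [phase], sin_zero, sub_zero] at hFTC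
  linarith

theorem hasDerivAt_approxDeriv {x b : ℝ} (h : b ^ 2 + x ≠ 0) :
    HasDerivAt (approxDeriv b) (x * approx b x + defect x b) x := by
  have hint := hasDerivAt_intervalIntegral_of_continuous (a := 0) (b := b) (x := x)
    (F := fun y t => t * sin (phase y t)) (F' := fun y t => t ^ 2 * cos (phase y t))
    (by unfold Function.uncurry phase; fun_prop) (by unfold Function.uncurry phase; fun_prop)
    fun y t => ((hasDerivAt_phase_left y t).sin.const_mul t).congr_deriv (by ring)
  refine (hint.neg.sub (hasDerivAt_boundaryDeriv_left h)).congr_deriv ?_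
  rw [integral_sq_mul_cos_phase, approx, boundary, defect]
  field_simp
  ring

theorem sq_add_pos_of_le {x c t : ℝ} (hc : 0 ≤ c) (hcx : 0 < c ^ 2 + x) (hct : c ≤ t) :
    0 < t ^ 2 + x := by
  nlinarith

theorem continuousOn_remainder (x : ℝ) : ContinuousOn (remainder x) {t | t ^ 2 + x ≠ 0} := by
  unfold remainder phase
  exact ContinuousOn.div (by fun_prop) (by fun_prop) fun t ht => pow_ne_zero 2 ht

theorem continuousOn_remainderDeriv (x : ℝ) :
    ContinuousOn (remainderDeriv x) {t | t ^ 2 + x ≠ 0} := by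
  unfold remainderDeriv phase
  exact .sub (.div (by fun_prop) (by fun_prop) fun t ht => pow_ne_zero 2 ht)
    (.div (by fun_prop) (by fun_prop) fun t ht => pow_ne_zero 3 ht)

theorem uIcc_subset_sq_add_ne_zero {x c b : ℝ} (hc : 0 ≤ c) (hcx : 0 < c ^ 2 + x)
    (hcb : c ≤ b) : uIcc c b ⊆ {t | t ^ 2 + x ≠ 0} := fun _ ht =>
  (sq_add_pos_of_le hc hcx (uIcc_of_le hcb ▸ ht).1).ne'

theorem approx_sub_approx {x c b : ℝ} (hc : 0 ≤ c) (hcx : 0 < c ^ 2 + x) (hcb : c ≤ b) :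
    approx b x - approx c x = ∫ t in c..b, remainder x t :=
  intervalIntegral_sub_boundary_eq
    (fun t ht => hasDerivAt_boundary_right (uIcc_subset_sq_add_ne_zero hc hcx hcb ht))
    (by unfold phase; fun_prop)
    ((continuousOn_remainder x).mono (uIcc_subset_sq_add_ne_zero hc hcx hcb)).intervalIntegrable

theorem approxDeriv_sub_approxDeriv {x c b : ℝ} (hc : 0 ≤ c) (hcx : 0 < c ^ 2 + x)
    (hcb : c ≤ b) : approxDeriv b x - approxDeriv c x = ∫ t in c..b, remainderDeriv x t := by
  have := intervalIntegral_sub_boundary_eq (f := fun t => -(t * sin (phase x t)))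
    (fun t ht => hasDerivAt_boundaryDeriv_right (uIcc_subset_sq_add_ne_zero hc hcx hcb ht))
    (by unfold phase; fun_prop)
    ((continuousOn_remainderDeriv x).mono
      (uIcc_subset_sq_add_ne_zero hc hcx hcb)).intervalIntegrable
  simpa only [approxDeriv, intervalIntegral.integral_neg] using this


theorem tendsto_sq_add (x : ℝ) : Tendsto (fun s : ℝ => s ^ 2 + x) atTop atTop :=
  tendsto_atTop_add_const_right _ x (tendsto_pow_atTop two_ne_zero)

theorem tendsto_inv_sq_add (x : ℝ) : Tendsto (fun s : ℝ => (s ^ 2 + x)⁻¹) atTop (𝓝 0) :=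
  (tendsto_sq_add x).inv_tendsto_atTop

theorem hasDerivAt_neg_inv_sq_add {x c t : ℝ} (hc : 0 ≤ c) (hcx : 0 < c ^ 2 + x) (hct : c ≤ t) :
    HasDerivAt (fun s => -(s ^ 2 + x)⁻¹) (2 * t / (t ^ 2 + x) ^ 2) t := by
  refine ((hasDerivAt_sq_add x t).inv (sq_add_pos_of_le hc hcx hct).ne').neg.congr_deriv ?_
  ring

theorem tendsto_neg_inv_sq_add (x : ℝ) : Tendsto (fun s : ℝ => -(s ^ 2 + x)⁻¹) atTop (𝓝 0) := by
  simpa using (tendsto_inv_sq_add x).neg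

theorem integrableOn_two_mul_div_sq_add_sq {x c : ℝ} (hc : 0 ≤ c) (hcx : 0 < c ^ 2 + x) :
    IntegrableOn (fun t => 2 * t / (t ^ 2 + x) ^ 2) (Ioi c) :=
  integrableOn_Ioi_deriv_of_nonneg' (fun _ ht => hasDerivAt_neg_inv_sq_add hc hcx ht)
    (fun t ht => by have := hc.trans_lt ht; positivity) (tendsto_neg_inv_sq_add x)

theorem integral_Ioi_two_mul_div_sq_add_sq {x c : ℝ} (hc : 0 ≤ c) (hcx : 0 < c ^ 2 + x) :
    ∫ t in Ioi c, 2 * t / (t ^ 2 + x) ^ 2 = (c ^ 2 + x)⁻¹ := by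
  rw [integral_Ioi_of_hasDerivAt_of_tendsto'
    (fun _ ht => hasDerivAt_neg_inv_sq_add hc hcx ht)
    (integrableOn_two_mul_div_sq_add_sq hc hcx) (tendsto_neg_inv_sq_add x)]
  ring

theorem norm_remainder_le {x t : ℝ} (ht : 0 ≤ t) (htx : 0 < t ^ 2 + x) :
    ‖remainder x t‖ ≤ 2 * t / (t ^ 2 + x) ^ 2 := by
  rw [Real.norm_eq_abs, remainder]
  exact abs_mul_sin_div_le (phase x t) 2 (by positivity) htx

theorem integrableOn_remainder {x c : ℝ} (hc : 0 ≤ c) (hcx : 0 < c ^ 2 + x) :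
    IntegrableOn (remainder x) (Ioi c) :=
  (integrableOn_two_mul_div_sq_add_sq hc hcx).mono'
    (((continuousOn_remainder x).mono fun _ ht =>
      (sq_add_pos_of_le hc hcx (le_of_lt ht)).ne').aestronglyMeasurable measurableSet_Ioi)
    ((ae_restrict_mem measurableSet_Ioi).mono fun t (ht : c < t) =>
      norm_remainder_le (hc.trans ht.le) (sq_add_pos_of_le hc hcx ht.le))

theorem abs_integral_remainder_le {x c : ℝ} (hc : 0 ≤ c) (hcx : 0 < c ^ 2 + x) :
    |∫ t in Ioi c, remainder x t| ≤ (c ^ 2 + x)⁻¹ := by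
  rw [← integral_Ioi_two_mul_div_sq_add_sq hc hcx]
  exact norm_integral_le_of_norm_le (integrableOn_two_mul_div_sq_add_sq hc hcx)
    ((ae_restrict_mem measurableSet_Ioi).mono fun t (ht : c < t) =>
      norm_remainder_le (hc.trans ht.le) (sq_add_pos_of_le hc hcx ht.le))

theorem tendsto_boundary (x : ℝ) : Tendsto (boundary x) atTop (𝓝 0) := by
  refine squeeze_zero_norm' ?_ (tendsto_inv_sq_add x)
  filter_upwards [(tendsto_sq_add x).eventually_gt_atTop 0] with b hb
  simpa [boundary, div_eq_mul_inv] using abs_mul_sin_div_le (phase x b) 1 zero_le_one hb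

theorem pi_mul_Ai_eq {x c : ℝ} (hc : 0 ≤ c) (hcx : 0 < c ^ 2 + x) :
    π * Ai x = approx c x + ∫ t in Ioi c, remainder x t := by
  have happrox := tendsto_of_sub_eq_intervalIntegral (integrableOn_remainder hc hcx)
    fun b hb => approx_sub_approx hc hcx hb
  have hpartial : Tendsto (fun R => ∫ t in (0 : ℝ)..R, cos (phase x t)) atTop
      (𝓝 (approx c x + ∫ t in Ioi c, remainder x t)) := by
    simpa [approx] using happrox.add (tendsto_boundary x)
  rw [Ai]
  change π * (1 / π * limUnder atTop fun R => ∫ t in (0 : ℝ)..R, cos (phase x t)) = _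
  rw [hpartial.limUnder_eq]
  field_simp

section LargeParameter

variable {x t : ℝ}

theorem half_sq_le_sq_add (h : 2 * |x| ≤ t ^ 2) : t ^ 2 / 2 ≤ t ^ 2 + x := by
  linarith [neg_abs_le x]

theorem sq_add_pos_of_two_mul_abs_le (ht : 1 ≤ t) (h : 2 * |x| ≤ t ^ 2) : 0 < t ^ 2 + x :=
  (by positivity : 0 < t ^ 2 / 2).trans_le (half_sq_le_sq_add h)

theorem two_mul_abs_le_sq_of_le {s : ℝ} (ht : 1 ≤ t) (h : 2 * |x| ≤ t ^ 2) (hts : t ≤ s) :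
    2 * |x| ≤ s ^ 2 :=
  h.trans (pow_le_pow_left₀ (by linarith) hts 2)

theorem abs_remainderDeriv_le (ht : 1 ≤ t) (h : 2 * |x| ≤ t ^ 2) :
    |remainderDeriv x t| ≤ 40 / t ^ 2 := by
  have hpos := sq_add_pos_of_two_mul_abs_le ht h
  calc |remainderDeriv x t|
      ≤ |2 * t ^ 2 * cos (phase x t) / (t ^ 2 + x) ^ 2|
        + |4 * t * sin (phase x t) / (t ^ 2 + x) ^ 3| := abs_sub _ _
    _ ≤ 2 * t ^ 2 / (t ^ 2 + x) ^ 2 + 4 * t / (t ^ 2 + x) ^ 3 := by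
      gcongr
      · exact abs_mul_cos_div_le _ 2 (by positivity) hpos
      · exact abs_mul_sin_div_le _ 3 (by positivity) hpos
    _ ≤ 2 * t ^ 2 / (t ^ 2 / 2) ^ 2 + 4 * t / (t ^ 2 / 2) ^ 3 := by
      gcongr <;> exact half_sq_le_sq_add h
    _ = 8 / t ^ 2 + 32 / t ^ 5 := by field_simp; ring
    _ ≤ 8 / t ^ 2 + 32 / t ^ 2 := by gcongr; norm_num
    _ = 40 / t ^ 2 := by ring

theorem abs_defect_le (ht : 1 ≤ t) (h : 2 * |x| ≤ t ^ 2) : |defect x t| ≤ 24 / t ^ 2 := by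
  have hpos := sq_add_pos_of_two_mul_abs_le ht h
  calc |defect x t|
      ≤ |2 * t * cos (phase x t) / (t ^ 2 + x) ^ 2|
        + |2 * sin (phase x t) / (t ^ 2 + x) ^ 3| := abs_sub _ _
    _ ≤ 2 * t / (t ^ 2 + x) ^ 2 + 2 / (t ^ 2 + x) ^ 3 := by
      gcongr
      · exact abs_mul_cos_div_le _ 2 (by positivity) hpos
      · exact abs_mul_sin_div_le _ 3 zero_le_two hpos
    _ ≤ 2 * t / (t ^ 2 / 2) ^ 2 + 2 / (t ^ 2 / 2) ^ 3 := by
      gcongr <;> exact half_sq_le_sq_add h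
    _ = 8 / t ^ 3 + 16 / t ^ 6 := by field_simp; ring
    _ ≤ 8 / t ^ 2 + 16 / t ^ 2 := by gcongr <;> norm_num
    _ = 24 / t ^ 2 := by ring

theorem integrableOn_remainderDeriv (ht : 1 ≤ t) (h : 2 * |x| ≤ t ^ 2) :
    IntegrableOn (remainderDeriv x) (Ioi t) := by
  have hs {s : ℝ} (hts : t < s) : 1 ≤ s ∧ 2 * |x| ≤ s ^ 2 :=
    ⟨ht.trans hts.le, two_mul_abs_le_sq_of_le ht h hts.le⟩
  refine (integrableOn_Ioi_div_sq 40 (by linarith)).mono'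
    (((continuousOn_remainderDeriv x).mono fun s hts =>
      (sq_add_pos_of_two_mul_abs_le (hs hts).1 (hs hts).2).ne').aestronglyMeasurable
        measurableSet_Ioi)
    ((ae_restrict_mem measurableSet_Ioi).mono fun s hts =>
      (Real.norm_eq_abs _).trans_le (abs_remainderDeriv_le (hs hts).1 (hs hts).2))

theorem dist_pi_mul_Ai_approx_le (ht : 1 ≤ t) (h : 2 * |x| ≤ t ^ 2) :
    dist (π * Ai x) (approx t x) ≤ 2 / t ^ 2 := by
  have hpos := sq_add_pos_of_two_mul_abs_le ht h
  rw [Real.dist_eq, pi_mul_Ai_eq (by linarith) hpos, add_sub_cancel_left]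
  calc _ ≤ (t ^ 2 + x)⁻¹ := abs_integral_remainder_le (by linarith) hpos
    _ ≤ (t ^ 2 / 2)⁻¹ := by gcongr; exact half_sq_le_sq_add h
    _ = 2 / t ^ 2 := by field_simp

theorem dist_mul_pi_mul_Ai_le (ht : 1 ≤ t) (h : 2 * |x| ≤ t ^ 2) :
    dist (x * (π * Ai x)) (x * approx t x + defect x t) ≤ (2 * |x| + 24) / t ^ 2 := by
  have hA := dist_pi_mul_Ai_approx_le ht h
  rw [Real.dist_eq] at hA ⊢
  calc |x * (π * Ai x) - (x * approx t x + defect x t)|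
      = |x * (π * Ai x - approx t x) - defect x t| := by ring_nf
    _ ≤ |x| * (2 / t ^ 2) + 24 / t ^ 2 := by
      refine (abs_sub _ _).trans (add_le_add ?_ (abs_defect_le ht h))
      rw [abs_mul]
      gcongr
    _ = (2 * |x| + 24) / t ^ 2 := by ring

theorem dist_approxDeriv_le {b : ℝ} (ht : 1 ≤ t) (h : 2 * |x| ≤ t ^ 2) (htb : t ≤ b) :
    dist (approxDeriv t x + ∫ s in Ioi t, remainderDeriv x s) (approxDeriv b x) ≤ 40 / b := by
  rw [Real.dist_eq, add_integral_Ioi_sub_eq (F := fun b => approxDeriv b x)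
    (integrableOn_remainderDeriv ht h) (fun b hb => approxDeriv_sub_approxDeriv (by linarith)
      (sq_add_pos_of_two_mul_abs_le ht h) hb) htb]
  exact abs_integral_Ioi_le_of_abs_le_div_sq (by linarith) fun s hs => abs_remainderDeriv_le
    (by linarith) (two_mul_abs_le_sq_of_le ht h (htb.trans hs.le))

end LargeParameter

theorem exists_hasDerivAt_pi_mul_Ai (K : ℝ) : ∃ g : ℝ → ℝ, ∀ x ∈ ball (0 : ℝ) K,
    HasDerivAt (fun y => π * Ai y) (g x) x ∧ HasDerivAt g (x * (π * Ai x)) x := by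
  set T := 2 * |K| + 1
  have hT {b x : ℝ} (hb : T ≤ b) (hx : x ∈ ball (0 : ℝ) K) : 1 ≤ b ∧ 2 * |x| ≤ b ^ 2 := by
    have hxK : |x| < |K| := (mem_ball_zero_iff.1 hx).trans_le (le_abs_self K)
    constructor <;> nlinarith [abs_nonneg K]
  have hTx {b x : ℝ} (hb : T ≤ b) (hx : x ∈ ball (0 : ℝ) K) : b ^ 2 + x ≠ 0 :=
    (sq_add_pos_of_two_mul_abs_le (hT hb hx).1 (hT hb hx).2).ne'
  set g := fun x => approxDeriv T x + ∫ t in Ioi T, remainderDeriv x t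
  have hU₀ : TendstoUniformlyOn approx (fun x => π * Ai x) atTop (ball 0 K) :=
    tendstoUniformlyOn_of_dist_le (tendsto_const_nhds.div_atTop (tendsto_pow_atTop two_ne_zero))
      ((eventually_ge_atTop T).mono fun b hb x hx =>
        dist_pi_mul_Ai_approx_le (hT hb hx).1 (hT hb hx).2)
  have hU₁ : TendstoUniformlyOn approxDeriv g atTop (ball 0 K) :=
    tendstoUniformlyOn_of_dist_le (tendsto_const_nhds.div_atTop tendsto_id)
      ((eventually_ge_atTop T).mono fun b hb x hx =>
        dist_approxDeriv_le (hT le_rfl hx).1 (hT le_rfl hx).2 hb)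
  have hU₂ : TendstoUniformlyOn (fun b x => x * approx b x + defect x b)
      (fun x => x * (π * Ai x)) atTop (ball 0 K) :=
    tendstoUniformlyOn_of_dist_le (δ := fun b => (2 * |K| + 24) / b ^ 2)
      (tendsto_const_nhds.div_atTop (tendsto_pow_atTop two_ne_zero))
      ((eventually_ge_atTop T).mono fun b hb x hx =>
        (dist_mul_pi_mul_Ai_le (hT hb hx).1 (hT hb hx).2).trans (by
          have : |x| ≤ |K| := (mem_ball_zero_iff.1 hx).le.trans (le_abs_self K)
          gcongr))
  refine ⟨g, fun x hx => ⟨?_, ?_⟩⟩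
  · exact hasDerivAt_of_tendstoUniformlyOn isOpen_ball hU₁
      ((eventually_ge_atTop T).mono fun b hb y hy => hasDerivAt_approx (hTx hb hy))
      (fun y hy => hU₀.tendsto_at hy) hx
  · exact hasDerivAt_of_tendstoUniformlyOn isOpen_ball hU₂
      ((eventually_ge_atTop T).mono fun b hb y hy => hasDerivAt_approxDeriv (hTx hb hy))
      (fun y hy => hU₁.tendsto_at hy) hx

theorem exists_hasDerivAt_Ai (x : ℝ) :
    ∃ g : ℝ → ℝ, (∀ᶠ y in 𝓝 x, HasDerivAt Ai (g y) y) ∧ HasDerivAt g (x * Ai x) x := by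
  obtain ⟨g, hg⟩ := exists_hasDerivAt_pi_mul_Ai (|x| + 1)
  have hx : x ∈ ball (0 : ℝ) (|x| + 1) := by simp
  have hπ (z : ℝ) : π⁻¹ * (π * z) = z := inv_mul_cancel_left₀ pi_ne_zero z
  refine ⟨fun y => π⁻¹ * g y, ?_, ?_⟩
  · filter_upwards [isOpen_ball.mem_nhds hx] with y hy
    simpa only [hπ] using (hg y hy).1.const_mul π⁻¹
  · simpa only [mul_left_comm π⁻¹ x, hπ] using (hg x hx).2.const_mul π⁻¹

end Airy

end

theorem hasDerivAt_Ai (x : ℝ) : HasDerivAt Ai (deriv Ai x) x :=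
  let ⟨_, hAi, _⟩ := Airy.exists_hasDerivAt_Ai x
  hAi.self_of_nhds.differentiableAt.hasDerivAt

theorem hasDerivAt_deriv_Ai (x : ℝ) : HasDerivAt (deriv Ai) (x * Ai x) x :=
  let ⟨_, hAi, hg⟩ := Airy.exists_hasDerivAt_Ai x
  hg.congr_of_eventuallyEq (hAi.mono fun _ hy => hy.deriv)

open Airy in
theorem abs_Ai_le {x : ℝ} (hx : 0 < x) : |Ai x| ≤ x⁻¹ := by
  have hx' : 0 < (0 : ℝ) ^ 2 + x := by simpa using hx
  have hrep := pi_mul_Ai_eq le_rfl hx'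
  rw [show approx 0 x = 0 by simp [approx, boundary, phase], zero_add] at hrep
  have h := abs_integral_remainder_le le_rfl hx'
  rw [← hrep, abs_mul, abs_of_pos pi_pos, zero_pow two_ne_zero, zero_add] at h
  nlinarith [abs_nonneg (Ai x), pi_gt_three]

theorem abs_Ai_add_le {u z : ℝ} (hz : 0 < z) (hu : 2 * |u| ≤ z) : |Ai (u + z)| ≤ 2 / z := by
  have huz : z / 2 ≤ u + z := by linarith [neg_abs_le u]
  calc |Ai (u + z)| ≤ (u + z)⁻¹ := abs_Ai_le (by linarith)
    _ ≤ (z / 2)⁻¹ := by gcongr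
    _ = 2 / z := by rw [inv_div]

theorem tendsto_Ai_atTop : Tendsto Ai atTop (𝓝 0) := by
  refine squeeze_zero_norm' ?_ tendsto_inv_atTop_zero
  filter_upwards [eventually_gt_atTop 0] with x hx using abs_Ai_le hx

theorem isBoundedUnder_deriv_Ai : IsBoundedUnder (· ≤ ·) atTop (norm ∘ deriv Ai) := by
  refine isBoundedUnder_of_eventually_le (a := √(deriv Ai 1 ^ 2 + 1)) ?_
  filter_upwards [eventually_ge_atTop 1] with x hx
  have henergy := antitone_deriv_sq_sub_mul_sq hasDerivAt_Ai hasDerivAt_deriv_Ai hx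
  have hAi : x * Ai x ^ 2 ≤ 1 := by
    have h := abs_Ai_le (x := x) (by linarith)
    calc x * Ai x ^ 2 = x * |Ai x| ^ 2 := by rw [sq_abs]
      _ ≤ x * x⁻¹ ^ 2 := by gcongr
      _ = x⁻¹ := by field_simp
      _ ≤ 1 := inv_le_one_of_one_le₀ hx
  exact Real.abs_le_sqrt (by nlinarith [sq_nonneg (Ai 1)])

theorem integrableOn_Ai_add_mul_Ai_add (u v c : ℝ) :
    IntegrableOn (fun z => Ai (u + z) * Ai (v + z)) (Ioi c) := by
  have hcont : Continuous Ai :=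
    continuous_iff_continuousAt.2 fun x => (hasDerivAt_Ai x).continuousAt
  refine integrableOn_Ioi_of_abs_le_div_sq (C := 4) (Z := 2 * |u| + 2 * |v| + 1) (by fun_prop)
    (by positivity) fun z hz => ?_
  have hz0 : 0 < z := by linarith [abs_nonneg u, abs_nonneg v]
  rw [abs_mul]
  calc |Ai (u + z)| * |Ai (v + z)| ≤ (2 / z) * (2 / z) := by
        gcongr
        exacts [abs_Ai_add_le hz0 (by linarith [abs_nonneg v]),
          abs_Ai_add_le hz0 (by linarith [abs_nonneg u])]
    _ = 4 / z ^ 2 := by ring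

theorem tendsto_wronskian_Ai_comp_add (u v : ℝ) :
    Tendsto (fun z => Ai (u + z) * deriv Ai (v + z) - deriv Ai (u + z) * Ai (v + z))
      atTop (𝓝 0) := by
  have hshift (a : ℝ) : Tendsto (fun z => a + z) atTop atTop :=
    tendsto_atTop_add_const_left _ a tendsto_id
  have hAi (a : ℝ) := tendsto_Ai_atTop.comp (hshift a)
  have hderiv (a : ℝ) := (hshift a).isBoundedUnder_comp isBoundedUnder_deriv_Ai
  simpa using ((hAi u).zero_mul_isBoundedUnder_le (hderiv v)).sub
    (isBoundedUnder_le_mul_tendsto_zero (hderiv u) (hAi v))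

theorem airy_kernel_formula (u v : ℝ) (huv : u ≠ v) :
    MeasureTheory.IntegrableOn (fun z : ℝ => Ai (u + z) * Ai (z + v)) (Set.Ioi 0) ∧
    ∫ z in Set.Ioi (0:ℝ), Ai (u + z) * Ai (z + v) =
      (Ai u * deriv Ai v - deriv Ai u * Ai v) / (u - v) := by
  simp only [add_comm _ v]
  have hvu : v - u ≠ 0 := sub_ne_zero.2 huv.symm
  refine ⟨integrableOn_Ai_add_mul_Ai_add u v 0, ?_⟩
  have hW (z : ℝ) (_ : z ∈ Ici 0) : HasDerivAt
      (fun z => (Ai (u + z) * deriv Ai (v + z) - deriv Ai (u + z) * Ai (v + z)) / (v - u))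
      (Ai (u + z) * Ai (v + z)) z :=
    ((hasDerivAt_wronskian_comp_add hasDerivAt_Ai hasDerivAt_deriv_Ai u v z).div_const
      (v - u)).congr_deriv (mul_div_cancel_left₀ _ hvu)
  rw [integral_Ioi_of_hasDerivAt_of_tendsto' hW (integrableOn_Ai_add_mul_Ai_add u v 0)
    ((tendsto_wronskian_Ai_comp_add u v).div_const (v - u)), add_zero, add_zero]
  field_simp
  ring
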